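/- arXiv:math/0605156 — 4 statements merged into one kernel-verified Lean document; each statement's English description precedes it below -/
import Mathlib

section
/- For any commutative ring R with unit, any L ∈ ℕ, any tuple m = (m₀,…,m_L) ∈ R^{L+1}, any topological space X, and any n ≥ 1, the composition of generalized cubical boundary operators vanishes: ∂_{n-1} ∘ ∂_n = 0 on the free R-module K_n(X) generated by continuous maps T : Iⁿ → X, where ∂_n(T) = Σ_{j=1}^{n} (-1)^{j+1} Σ_{i=0}^{L} m_i · ⟨T⟩_{n,i,j} and ⟨T⟩_{n,i,j}(x₁,…,x_{n-1}) = T(x₁,…,x_{j-1}, i/L, x_j,…,x_{n-1}). -/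
open scoped BigOperators

noncomputable section

/-- The `n`-dimensional unit cube. -/
abbrev Cube (n : ℕ) : Type := Fin n → unitInterval

/-- The point `i/L` of the unit interval, for `i ∈ {0,…,L}`. -/
def vertexVal (L : ℕ) (i : Fin (L + 1)) : unitInterval :=
  ⟨(i : ℝ) / L, ⟨by positivity,
    div_le_one_of_le₀ (by exact_mod_cast Fin.is_le i) (Nat.cast_nonneg L)⟩⟩

/-- Insertion of the constant `c` at the `j`-th coordinate. -/
def faceMap {n : ℕ} (j : Fin (n + 1)) (c : unitInterval) : C(Cube n, Cube (n + 1)) :=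
  ⟨fun x => j.insertNth c x, (continuous_const : Continuous fun _ : Cube n => c).finInsertNth j continuous_id⟩

/-- The face `⟨T⟩_{n,·,j}` of a singular cube at value `c` in direction `j`. -/
def face {X : Type} [TopologicalSpace X] {n : ℕ} (T : C(Cube (n + 1), X)) (j : Fin (n + 1))
    (c : unitInterval) : C(Cube n, X) :=
  T.comp (faceMap j c)

/-- The module of cubical `n`-chains: the free `R`-module on the continuous maps `Iⁿ → X`. -/
abbrev Kmod (R : Type) [CommRing R] (X : Type) [TopologicalSpace X] (n : ℕ) : Type :=
  C(Cube n, X) →₀ R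

/-- The weighted boundary operator. -/
def bdry (R : Type) [CommRing R] {L : ℕ} (m : Fin (L + 1) → R) (X : Type) [TopologicalSpace X]
    (n : ℕ) : Kmod R X (n + 1) →ₗ[R] Kmod R X n :=
  Finsupp.lift (Kmod R X n) R C(Cube (n + 1), X) fun T =>
    ∑ j : Fin (n + 1), ∑ i : Fin (L + 1),
      ((-1 : R) ^ (j : ℕ) * m i) • Finsupp.single (face T j (vertexVal L i)) (1 : R)

/-! Deleting coordinate `i` of the `(n+2)`-cube and then coordinate `j` gives the same face as
deleting `i.succAbove j` and then `j.predAbove i`, and this fixed-point-free involution of the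
index pairs flips the sign `(-1)^(i+j)`. Up to that sign, the term of `∂∂T` at `(i, j)` is
`∑ a b, m a * m b • ⟨⟨T⟩_{a,i}⟩_{b,j}`, which the involution maps to the same sum with `a` and `b`
exchanged. So `∂∂T` is an alternating sum of a function invariant under the involution, and its
terms cancel in pairs. -/

namespace Fin

variable {n : ℕ}

theorem insertNth_succAbove_insertNth_predAbove {α : Type*} (i : Fin (n + 2)) (j : Fin (n + 1))
    (c c' : α) (x : Fin n → α) :
    insertNth (α := fun _ => α) (i.succAbove j) c' (insertNth (j.predAbove i) c x) =
      insertNth (α := fun _ => α) i c (insertNth j c' x) := by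
  rw [insertNth_eq_iff, eq_comm, insertNth_eq_iff]
  refine ⟨by simp only [insertNth_apply_succAbove, insertNth_apply_same], ?_, ?_⟩
  · simp only [removeNth, succAbove_succAbove_predAbove, insertNth_apply_same]
  · rw [← removeNth_removeNth_eq_swap]
    simp only [removeNth_insertNth]

theorem sum_sum_neg_one_pow_smul_eq_zero {R M : Type*} [Ring R] [AddCommGroup M] [Module R M]
    (g : Fin (n + 2) → Fin (n + 1) → M)
    (hg : ∀ i j, g (i.succAbove j) (j.predAbove i) = g i j) :
    ∑ i : Fin (n + 2), ∑ j : Fin (n + 1), (-1 : R) ^ ((i : ℕ) + j) • g i j = 0 := by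
  rw [← Finset.sum_product', Finset.univ_product_univ]
  refine Finset.sum_ninvolution (fun p => (p.1.succAbove p.2, p.2.predAbove p.1)) (fun p => ?_)
    (fun p _ => ne_of_apply_ne Prod.fst (succAbove_ne p.1 p.2)) (fun _ => Finset.mem_univ _)
    (fun p => ?_)
  · simp only [hg, neg_one_pow_succAbove_add_predAbove, neg_smul, add_neg_cancel]
  · simp only [succAbove_succAbove_predAbove, predAbove_predAbove_succAbove]

end Fin

section

variable {X : Type} [TopologicalSpace X] {n : ℕ}

theorem face_face_succAbove_predAbove (T : C(Cube (n + 2), X)) (i : Fin (n + 2)) (j : Fin (n + 1))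
    (c c' : unitInterval) :
    face (face T (i.succAbove j) c') (j.predAbove i) c = face (face T i c) j c' := by
  ext x
  exact congrArg T (Fin.insertNth_succAbove_insertNth_predAbove i j c c' x)

variable (R : Type) [CommRing R] {L : ℕ} (m : Fin (L + 1) → R)

theorem bdry_single (T : C(Cube (n + 1), X)) :
    bdry R m X n (Finsupp.single T 1) = ∑ j : Fin (n + 1), ∑ i : Fin (L + 1),
      ((-1 : R) ^ (j : ℕ) * m i) • Finsupp.single (face T j (vertexVal L i)) 1 := by
  simp only [bdry, Finsupp.lift_apply, zero_smul, Finsupp.sum_single_index, one_smul]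

theorem bdry_bdry_single (T : C(Cube (n + 2), X)) :
    bdry R m X n (bdry R m X (n + 1) (Finsupp.single T 1)) =
      ∑ j : Fin (n + 2), ∑ k : Fin (n + 1), (-1 : R) ^ ((j : ℕ) + k) •
        ∑ i : Fin (L + 1), ∑ i' : Fin (L + 1), (m i * m i') •
          Finsupp.single (face (face T j (vertexVal L i)) k (vertexVal L i')) (1 : R) := by
  simp only [bdry_single, map_sum, map_smul, Finset.smul_sum, smul_smul]
  refine Finset.sum_congr rfl fun j _ => ?_
  rw [Finset.sum_comm]
  refine Finset.sum_congr rfl fun k _ => Finset.sum_congr rfl fun i _ =>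
    Finset.sum_congr rfl fun i' _ => ?_
  rw [pow_add, mul_mul_mul_comm]

end

/-- For any commutative ring `R`, length `L`, weight `m ∈ R^{L+1}`,
topological space `X` and any `n`, the composition of two consecutive generalized
cubical boundary operators vanishes: `∂ ∘ ∂ = 0` (this covers `∂_{n-1} ∘ ∂_n = 0`
for all `n ≥ 1`, the case `n = 1` being trivial since `K_{-1} = 0`). -/
theorem bdry_comp_bdry_eq_zero (R : Type) [CommRing R] (L : ℕ) (m : Fin (L + 1) → R)
    (X : Type) [TopologicalSpace X] (n : ℕ) :
    (bdry R m X n).comp (bdry R m X (n + 1)) = 0 := by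
  refine Finsupp.lhom_ext' fun T => LinearMap.ext_ring ?_
  rw [LinearMap.comp_apply, LinearMap.comp_apply, Finsupp.lsingle_apply, bdry_bdry_single]
  refine Fin.sum_sum_neg_one_pow_smul_eq_zero _ fun j k => ?_
  rw [Finset.sum_comm]
  simp only [face_face_succAbove_predAbove, mul_comm]
end
end

section
/- For the one-point space {p}, the generalized cubical homology modules of weight m with index σ = Σ_{i=0}^L m_i satisfy: H_n(p) ≅ {x ∈ R : σ·x = 0} if n is odd, and H_n(p) ≅ R/(σR) if n is even. In particular if σ = 0 then H_n(p) ≅ R for all n ≥ 0. -/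
open scoped BigOperators

noncomputable section

/-- Cycles: kernel of the boundary operator (everything in degree `0`). -/
def cyclesMod (R : Type) [CommRing R] {L : ℕ} (m : Fin (L + 1) → R) (X : Type)
    [TopologicalSpace X] : (n : ℕ) → Submodule R (Kmod R X n)
  | 0 => ⊤
  | (k + 1) => LinearMap.ker (bdry R m X k)

/-- Boundaries, viewed inside the module of cycles. -/
def boundariesIn (R : Type) [CommRing R] {L : ℕ} (m : Fin (L + 1) → R) (X : Type)
    [TopologicalSpace X] (n : ℕ) : Submodule R ↥(cyclesMod R m X n) :=
  (LinearMap.range (bdry R m X n)).comap (cyclesMod R m X n).subtype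

/-- `H_n(X) ≅ A` expressed via the first isomorphism theorem: there is a surjective
linear map from the cycles onto `A` whose kernel is exactly the boundaries. -/
def HomologyIso (R : Type) [CommRing R] {L : ℕ} (m : Fin (L + 1) → R) (X : Type)
    [TopologicalSpace X] (n : ℕ) (A : Type) [AddCommGroup A] [Module R A] : Prop :=
  ∃ φ : ↥(cyclesMod R m X n) →ₗ[R] A,
    Function.Surjective φ ∧ LinearMap.ker φ = boundariesIn R m X n

/-! On the one-point space each chain module is free of rank one on the constant cube, and all
faces of the constant cube are again constant, so the boundary `K_{n+1} → K_n` is multiplication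
by `σ · ∑_{j ≤ n} (-1)^j`, i.e. by `σ` for even `n` and by `0` for odd `n`. Evaluating at the
constant cube thus identifies the `n`-cycles with `{x : b x = 0}` and the `n`-boundaries with
`a R`, where `(a, b) = (0, σ)` for odd `n` and `(σ, 0)` for even `n`. -/

instance ContinuousMap.instUniqueOfSubsingleton {α β : Type*} [TopologicalSpace α]
    [TopologicalSpace β] [Inhabited β] [Subsingleton β] : Unique C(α, β) :=
  Unique.mk' _

section Point

variable {R : Type} [CommRing R] {L : ℕ} (m : Fin (L + 1) → R)

theorem bdry_point_apply (n : ℕ) (x : Kmod R PUnit (n + 1)) :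
    bdry R m PUnit n x = Finsupp.single default ((if Even n then ∑ i, m i else 0) * x default) := by
  conv_lhs => rw [Finsupp.unique_single x]
  rw [bdry, Finsupp.lift_apply, Finsupp.sum_single_index (by simp)]
  simp only [Subsingleton.elim (face _ _ _) default, ← Finsupp.single_finsetSum,
    Finsupp.smul_single]
  congr 1
  simp only [smul_eq_mul, mul_one, ← Finset.sum_mul_sum, Fin.sum_neg_one_pow, Nat.even_add_one]
  by_cases h : Even n <;> simp [h, mul_comm]

theorem mem_cyclesMod_point_iff (n : ℕ) (x : Kmod R PUnit n) :
    x ∈ cyclesMod R m PUnit n ↔ (if Odd n then ∑ i, m i else 0) * x default = 0 := by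
  cases n with
  | zero => simp [cyclesMod]
  | succ k =>
    rw [cyclesMod, LinearMap.mem_ker, bdry_point_apply, Finsupp.single_eq_zero]
    simp [Nat.odd_add_one]

theorem mem_boundariesIn_point_iff (n : ℕ) (z : cyclesMod R m PUnit n) :
    z ∈ boundariesIn R m PUnit n ↔
      (z : Kmod R PUnit n) default ∈ Ideal.span {if Even n then ∑ i, m i else 0} := by
  simp only [boundariesIn, Submodule.mem_comap, LinearMap.mem_range, Submodule.coe_subtype,
    Ideal.mem_span_singleton', bdry_point_apply]
  constructor
  · rintro ⟨w, hw⟩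
    exact ⟨w default, by rw [← hw, Finsupp.single_eq_same, mul_comm]⟩
  · rintro ⟨r, hr⟩
    refine ⟨Finsupp.single default r, ?_⟩
    rw [Finsupp.single_eq_same, mul_comm, hr, ← Finsupp.unique_single]

theorem map_cyclesMod_point (n : ℕ) :
    (cyclesMod R m PUnit n).map
        (Finsupp.uniqueLinearEquiv R R (default : C(Cube n, PUnit))).toLinearMap =
      LinearMap.ker (LinearMap.lsmul R R (if Odd n then ∑ i, m i else 0)) := by
  ext r
  simp [Submodule.map_equiv_eq_comap_symm, mem_cyclesMod_point_iff]

theorem homologyIso_point {n : ℕ} {a b : R} (hb : (if Odd n then ∑ i, m i else 0) = b)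
    (ha : (if Even n then ∑ i, m i else 0) = a) {A : Type} [AddCommGroup A] [Module R A]
    (ψ : LinearMap.ker (LinearMap.lsmul R R b) →ₗ[R] A) (hψ : Function.Surjective ψ)
    (hker : LinearMap.ker ψ =
      Submodule.comap (LinearMap.ker (LinearMap.lsmul R R b)).subtype (Ideal.span {a})) :
    HomologyIso R m PUnit n A := by
  subst a b
  let e := (Finsupp.uniqueLinearEquiv R R default).ofSubmodules _ _ (map_cyclesMod_point m n)
  refine ⟨ψ ∘ₗ e.toLinearMap, hψ.comp e.surjective, ?_⟩
  ext z
  rw [LinearMap.mem_ker, LinearMap.comp_apply, ← LinearMap.mem_ker, hker,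
    mem_boundariesIn_point_iff]
  rfl

end Point

/-- For the one-point space, the generalized cubical homology modules of
weight `m` with index `σ = Σ mᵢ` are `{x : R | σ·x = 0}` in odd degrees and `R/(σR)` in
even degrees; in particular they are all `≅ R` when `σ = 0`. -/
theorem homology_of_point (R : Type) [CommRing R] (L : ℕ) (m : Fin (L + 1) → R) (n : ℕ) :
    (Odd n → HomologyIso R m PUnit n
        ↥(LinearMap.ker (LinearMap.lsmul R R (∑ i, m i)))) ∧
    (Even n → HomologyIso R m PUnit n (R ⧸ Ideal.span {∑ i, m i})) ∧
    ((∑ i, m i) = 0 → HomologyIso R m PUnit n R) := by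
  have subtype_surjective : Function.Surjective (LinearMap.ker (LinearMap.lsmul R R 0)).subtype :=
    fun r => ⟨⟨r, by simp⟩, rfl⟩
  refine ⟨fun hn => ?_, fun hn => ?_, fun hσ => ?_⟩
  · refine homologyIso_point m (if_pos hn) (if_neg (Nat.not_even_iff_odd.mpr hn)) LinearMap.id
      Function.surjective_id ?_
    simp
  · refine homologyIso_point m (if_neg (Nat.not_odd_iff_even.mpr hn)) (if_pos hn)
      ((Ideal.span {∑ i, m i}).mkQ ∘ₗ (LinearMap.ker _).subtype)
      ((Submodule.mkQ_surjective _).comp subtype_surjective) ?_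
    rw [LinearMap.ker_comp, Submodule.ker_mkQ]
  · refine homologyIso_point m (a := 0) (b := 0) (by simp [hσ]) (by simp [hσ]) _
      subtype_surjective ?_
    simp
end
end

section
/- With the chain homotopy Θ as above and u ∈ K_n(X) a cycle (∂_n(u) = 0), the chain e₀(u) − e₁(u) ∈ K_n(X × I) is a boundary, i.e. lies in the image of ∂_{n+1}; consequently H_n(e₀) = H_n(e₁) on homology, and the generalized cubical homology with weight m satisfies the homotopy axiom whenever the ideal generated by {m₀,…,m_L} is all of R. -/
open scoped BigOperators

noncomputable section

/-- The chain map induced by a continuous map `f : X → Y`. -/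
def chainMap (R : Type) [CommRing R] {X Y : Type} [TopologicalSpace X] [TopologicalSpace Y]
    (f : C(X, Y)) (n : ℕ) : Kmod R X n →ₗ[R] Kmod R Y n :=
  Finsupp.lift (Kmod R Y n) R C(Cube n, X) fun T => Finsupp.single (f.comp T) (1 : R)

/-- The inclusion `x ↦ (x, t)` of `X` into `X × I`. -/
def epsMap (X : Type) [TopologicalSpace X] (t : unitInterval) : C(X, X × unitInterval) :=
  ⟨fun x => (x, t), continuous_id.prodMk continuous_const⟩

/-!
For `φ : I → I` the prism `P_φ` sends a singular cube `T : Iⁿ → X` to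
`(y, t) ↦ (T y, φ t) : Iⁿ⁺¹ → X × I`. Its faces in the first `n` directions are the prisms on
the faces of `T`, and its faces in the last direction are `e_{φ(i/L)} ∘ T`; hence on a cycle `u`,
`∂ (P_φ u) = ± ∑ᵢ mᵢ e_{φ(i/L)}(u)` depends only on the values of `φ` at the vertices `i/L`.
For the tent function `φₖ` at `k/L` this differs from the value for `φ = 0` by `± mₖ (e₁ u - e₀ u)`,
so if `∑ₖ rₖ mₖ = 1` then `Θ = ∑ₖ rₖ (P_{φₖ} - P_0)` has `∂ (Θ u) = ± (e₁ u - e₀ u)`.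
A homotopy `H` from `f` to `g` factors as `f = H ∘ e₀`, `g = H ∘ e₁`, and chain maps commute
with `∂`.
-/

namespace CubicalHomotopy

lemma init_insertNth_castSucc {n : ℕ} {α : Type*} (j : Fin (n + 1)) (c : α)
    (x : Fin (n + 1) → α) :
    Fin.init (j.castSucc.insertNth c x : Fin (n + 2) → α) =
      (j.insertNth c (Fin.init x) : Fin (n + 1) → α) := by
  funext i
  rcases eq_or_ne i j with rfl | hij
  · simp [Fin.init]
  · obtain ⟨i, rfl⟩ := Fin.exists_succAbove_eq hij
    simp [Fin.init, ← Fin.castSucc_succAbove_castSucc]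

def tent (L : ℕ) (k : Fin (L + 1)) : C(unitInterval, unitInterval) :=
  ⟨fun t => Set.projIcc 0 1 zero_le_one (1 - L * |(t : ℝ) - k / L|),
    continuous_projIcc.comp (by fun_prop)⟩

lemma natCast_mul_abs_vertexVal_sub (L : ℕ) (i k : Fin (L + 1)) :
    (L : ℝ) * |(vertexVal L i : ℝ) - k / L| = |(i : ℝ) - k| := by
  rcases Nat.eq_zero_or_pos L with rfl | hL
  -- for `L = 0` the junk value `0 / 0 = 0` is harmless, since then `i = k`
  · simp [Subsingleton.elim (α := Fin 1) i k]
  · rw [show (vertexVal L i : ℝ) = i / L from rfl, div_sub_div_same, abs_div, Nat.abs_cast,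
      mul_div_cancel₀ _ (by positivity)]

lemma tent_vertexVal (L : ℕ) (k i : Fin (L + 1)) :
    tent L k (vertexVal L i) = if i = k then 1 else 0 := by
  apply Subtype.ext
  change (Set.projIcc (0 : ℝ) 1 zero_le_one _ : ℝ) = _
  rw [natCast_mul_abs_vertexVal_sub]
  split_ifs with h
  · simp [h]
  · have hik : ((i : ℕ) : ℤ) ≠ k := by exact_mod_cast Fin.val_ne_of_ne h
    have : (1 : ℝ) ≤ |(i : ℝ) - k| := by exact_mod_cast Int.one_le_abs (sub_ne_zero_of_ne hik)
    rw [Set.projIcc_of_le_left _ (by linarith)]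
    rfl

variable {X : Type} [TopologicalSpace X]

def prism (φ : C(unitInterval, unitInterval)) {n : ℕ} (T : C(Cube n, X)) :
    C(Cube (n + 1), X × unitInterval) where
  toFun y := (T (Fin.init y), φ (y (Fin.last n)))
  continuous_toFun := by fun_prop

lemma face_prism_last (φ : C(unitInterval, unitInterval)) {n : ℕ} (T : C(Cube n, X))
    (c : unitInterval) : face (prism φ T) (Fin.last n) c = (epsMap X (φ c)).comp T := by
  ext x <;> simp [face, faceMap, prism, epsMap, Fin.insertNth_last', Fin.init_snoc]

lemma face_prism_castSucc (φ : C(unitInterval, unitInterval)) {n : ℕ} (T : C(Cube (n + 1), X))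
    (j : Fin (n + 1)) (c : unitInterval) :
    face (prism φ T) j.castSucc c = prism φ (face T j c) := by
  have hlast : j.castSucc.succAbove (Fin.last n) = Fin.last (n + 1) := by
    rw [Fin.succAbove_castSucc_of_le j (Fin.last n) (Fin.le_last j), Fin.succ_last]
  ext x : 1
  refine Prod.ext ?_ ?_
  · simp [face, faceMap, prism, init_insertNth_castSucc]
  · change φ ((j.castSucc.insertNth c x : Cube (n + 2)) (Fin.last (n + 1))) = φ (x (Fin.last n))
    rw [← hlast, Fin.insertNth_apply_succAbove]

variable {Y : Type} [TopologicalSpace Y] (R : Type) [CommRing R] {L : ℕ} (m : Fin (L + 1) → R)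

@[simp]
lemma bdry_single {n : ℕ} (T : C(Cube (n + 1), X)) :
    bdry R m X n (Finsupp.single T 1) =
      ∑ j : Fin (n + 1), ∑ i : Fin (L + 1),
        ((-1 : R) ^ (j : ℕ) * m i) • Finsupp.single (face T j (vertexVal L i)) 1 := by
  simp [bdry]

@[simp]
lemma chainMap_single (f : C(X, Y)) {n : ℕ} (T : C(Cube n, X)) :
    chainMap R f n (Finsupp.single T 1) = Finsupp.single (f.comp T) 1 := by
  simp [chainMap]

lemma Kmod.linearMap_ext {M : Type} [AddCommGroup M] [Module R M] {n : ℕ}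
    {φ ψ : Kmod R X n →ₗ[R] M} (h : ∀ T, φ (Finsupp.single T 1) = ψ (Finsupp.single T 1)) :
    φ = ψ :=
  Finsupp.lhom_ext' fun T => LinearMap.ext_ring (h T)

lemma bdry_comp_chainMap (f : C(X, Y)) (n : ℕ) :
    bdry R m Y n ∘ₗ chainMap R f (n + 1) = chainMap R f n ∘ₗ bdry R m X n :=
  Kmod.linearMap_ext R fun T => by
    simp only [LinearMap.comp_apply, chainMap_single, bdry_single, map_sum, map_smul]
    rfl

lemma chainMap_comp {Z : Type} [TopologicalSpace Z] (f : C(Y, Z)) (g : C(X, Y)) (n : ℕ) :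
    chainMap R (f.comp g) n = chainMap R f n ∘ₗ chainMap R g n :=
  Kmod.linearMap_ext R fun T => by simp [ContinuousMap.comp_assoc]

def prismMap (φ : C(unitInterval, unitInterval)) (n : ℕ) :
    Kmod R X n →ₗ[R] Kmod R (X × unitInterval) (n + 1) :=
  Finsupp.lmapDomain R R (prism φ)

def vertexSum (φ : C(unitInterval, unitInterval)) (n : ℕ) :
    Kmod R X n →ₗ[R] Kmod R (X × unitInterval) n :=
  ∑ i, m i • chainMap R (epsMap X (φ (vertexVal L i))) n

lemma bdry_comp_prismMap_zero (φ : C(unitInterval, unitInterval)) :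
    bdry R m (X × unitInterval) 0 ∘ₗ prismMap R φ 0 = vertexSum R m φ 0 :=
  Kmod.linearMap_ext R fun T => by
    simp only [LinearMap.comp_apply, prismMap, Finsupp.lmapDomain_apply, Finsupp.mapDomain_single,
      bdry_single, Fin.sum_univ_castSucc (n := 0), Fin.sum_univ_zero, zero_add, face_prism_last,
      Fin.val_last, pow_zero, one_mul, vertexSum, LinearMap.sum_apply, LinearMap.smul_apply,
      chainMap_single]

lemma bdry_comp_prismMap_succ (φ : C(unitInterval, unitInterval)) (n : ℕ) :
    bdry R m (X × unitInterval) (n + 1) ∘ₗ prismMap R φ (n + 1) =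
      prismMap R φ n ∘ₗ bdry R m X n + (-1 : R) ^ (n + 1) • vertexSum R m φ (n + 1) :=
  Kmod.linearMap_ext R fun T => by
    simp only [LinearMap.comp_apply, prismMap, Finsupp.lmapDomain_apply, Finsupp.mapDomain_single,
      bdry_single, Fin.sum_univ_castSucc (n := n + 1), face_prism_castSucc, face_prism_last,
      Fin.val_castSucc, Fin.val_last, vertexSum, LinearMap.add_apply, LinearMap.sum_apply,
      LinearMap.smul_apply, chainMap_single, map_sum, map_smul, Finset.smul_sum, mul_smul]

lemma bdry_prismMap_of_mem_cyclesMod (φ : C(unitInterval, unitInterval)) {n : ℕ}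
    {u : Kmod R X n} (hu : u ∈ cyclesMod R m X n) :
    bdry R m (X × unitInterval) n (prismMap R φ n u) = (-1 : R) ^ n • vertexSum R m φ n u := by
  cases n with
  | zero => simpa using LinearMap.congr_fun (bdry_comp_prismMap_zero R m φ) u
  | succ n =>
    have hu : bdry R m X n u = 0 := hu
    simpa [hu] using LinearMap.congr_fun (bdry_comp_prismMap_succ R m φ n) u

lemma vertexSum_tent_sub_vertexSum_zero (k : Fin (L + 1)) {n : ℕ} (u : Kmod R X n) :
    vertexSum R m (tent L k) n u - vertexSum R m (ContinuousMap.const _ 0) n u =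
      m k • (chainMap R (epsMap X 1) n u - chainMap R (epsMap X 0) n u) := by
  simp only [vertexSum, LinearMap.sum_apply, LinearMap.smul_apply, ← Finset.sum_sub_distrib,
    ← smul_sub, tent_vertexVal, ContinuousMap.const_apply]
  rw [Fintype.sum_eq_single k fun i hi => by simp [hi]]
  simp

def chainHomotopy (r : Fin (L + 1) → R) (n : ℕ) :
    Kmod R X n →ₗ[R] Kmod R (X × unitInterval) (n + 1) :=
  ∑ k, r k • (prismMap R (tent L k) n - prismMap R (ContinuousMap.const _ 0) n)

lemma bdry_chainHomotopy_of_mem_cyclesMod {r : Fin (L + 1) → R} (hr : ∑ k, r k * m k = 1)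
    {n : ℕ} {u : Kmod R X n} (hu : u ∈ cyclesMod R m X n) :
    bdry R m (X × unitInterval) n (chainHomotopy R r n u) =
      (-1 : R) ^ n • (chainMap R (epsMap X 1) n u - chainMap R (epsMap X 0) n u) := by
  simp only [chainHomotopy, LinearMap.sum_apply, LinearMap.smul_apply, LinearMap.sub_apply,
    map_sum, map_smul, map_sub, bdry_prismMap_of_mem_cyclesMod R m _ hu, ← smul_sub,
    vertexSum_tent_sub_vertexSum_zero, smul_comm (r _) ((-1 : R) ^ n), smul_smul (r _),
    ← Finset.smul_sum, ← Finset.sum_smul, hr, one_smul]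

theorem chainMap_epsMap_zero_sub_one_mem_range_bdry
    (hm : ∃ r : Fin (L + 1) → R, ∑ k, r k * m k = 1) {n : ℕ} {u : Kmod R X n}
    (hu : u ∈ cyclesMod R m X n) :
    chainMap R (epsMap X 0) n u - chainMap R (epsMap X 1) n u ∈
      LinearMap.range (bdry R m (X × unitInterval) n) := by
  obtain ⟨r, hr⟩ := hm
  refine ⟨-((-1 : R) ^ n • chainHomotopy R r n u), ?_⟩
  rw [map_neg, map_smul, bdry_chainHomotopy_of_mem_cyclesMod R m hr hu, smul_smul, ← mul_pow,
    neg_one_mul, neg_neg, one_pow, one_smul, neg_sub]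

theorem chainMap_sub_mem_range_bdry_of_homotopic
    (hm : ∃ r : Fin (L + 1) → R, ∑ k, r k * m k = 1) {f g : C(X, Y)} (hfg : f.Homotopic g)
    {n : ℕ} {u : Kmod R X n} (hu : u ∈ cyclesMod R m X n) :
    chainMap R f n u - chainMap R g n u ∈ LinearMap.range (bdry R m Y n) := by
  obtain ⟨H, rfl, rfl⟩ :
      ∃ H : C(X × unitInterval, Y), H.comp (epsMap X 0) = f ∧ H.comp (epsMap X 1) = g :=
    let ⟨H⟩ := hfg
    ⟨H.toContinuousMap.comp .prodSwap, ContinuousMap.ext H.apply_zero,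
      ContinuousMap.ext H.apply_one⟩
  obtain ⟨w, hw⟩ := chainMap_epsMap_zero_sub_one_mem_range_bdry R m hm hu
  refine ⟨chainMap R H (n + 1) w, ?_⟩
  rw [chainMap_comp, chainMap_comp, LinearMap.comp_apply, LinearMap.comp_apply, ← map_sub, ← hw,
    ← LinearMap.comp_apply, bdry_comp_chainMap, LinearMap.comp_apply]

end CubicalHomotopy

open CubicalHomotopy in
/-- If the weight `m` generates the unit ideal, then for every cycle `u`
the chain `e₀(u) − e₁(u)` is a boundary; consequently (since a homotopy `H : f ≃ g`
factors `f = H∘e₀`, `g = H∘e₁`) homotopic maps induce chain maps that agree on homology,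
i.e. the generalized cubical homology of weight `m` satisfies the homotopy axiom. -/
theorem homotopy_axiom_of_span (R : Type) [CommRing R] (L : ℕ) (m : Fin (L + 1) → R)
    (hspan : ∃ r : Fin (L + 1) → R, ∑ k, r k * m k = 1) :
    (∀ (X : Type) [TopologicalSpace X] (n : ℕ) (u : Kmod R X n), u ∈ cyclesMod R m X n →
      chainMap R (epsMap X 0) n u - chainMap R (epsMap X 1) n u
        ∈ LinearMap.range (bdry R m (X × unitInterval) n)) ∧
    (∀ (X Y : Type) [TopologicalSpace X] [TopologicalSpace Y] (f g : C(X, Y)),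
      f.Homotopic g → ∀ (n : ℕ) (u : Kmod R X n), u ∈ cyclesMod R m X n →
        chainMap R f n u - chainMap R g n u ∈ LinearMap.range (bdry R m Y n)) :=
  ⟨fun _ _ _ _ hu => chainMap_epsMap_zero_sub_one_mem_range_bdry R m hspan hu,
    fun _ _ _ _ _ _ hfg _ _ hu => chainMap_sub_mem_range_bdry_of_homotopic R m hspan hfg hu⟩
end
end

section
/- If the generalized cubical homology theory H with weight m = (m₀,…,m_L) ∈ R^{L+1} satisfies the homotopy axiom, then the ideal of R generated by {m₀,…,m_L} equals R, i.e. there exist r₀,…,r_L ∈ R with Σ_{k=0}^L r_k·m_k = 1. -/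
open scoped BigOperators

noncomputable section

/-!
Every coefficient of a weighted boundary is an `R`-combination of the weights, so it lies in
the ideal `I` generated by them. The constant maps `0, 1 : [0,1]⁰ → [0,1]` are homotopic, and the
difference of the chains they induce from the `0`-cycle `[id]` has coefficient `-1` at the
constant cube `1`. The homotopy axiom makes this difference a boundary, hence `1 ∈ I`.
-/

section

variable {R : Type} [CommRing R] {L : ℕ} (m : Fin (L + 1) → R) {X : Type} [TopologicalSpace X]

theorem bdry_single_apply_mem_span {n : ℕ} (T : C(Cube (n + 1), X)) (r : R)
    (S : C(Cube n, X)) :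
    bdry R m X n (Finsupp.single T r) S ∈ Ideal.span (Set.range m) := by
  simp only [bdry, Finsupp.lift_apply, Finsupp.sum_single_index, zero_smul,
    Finsupp.smul_apply, Finsupp.coe_finsetSum, Finset.sum_apply, smul_eq_mul]
  refine Ideal.mul_mem_left _ _ (Ideal.sum_mem _ fun j _ => Ideal.sum_mem _ fun i _ => ?_)
  rw [mul_comm, ← mul_assoc]
  exact Ideal.mul_mem_left _ _ (Ideal.subset_span ⟨i, rfl⟩)

theorem bdry_apply_mem_span {n : ℕ} (w : Kmod R X (n + 1)) (S : C(Cube n, X)) :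
    bdry R m X n w S ∈ Ideal.span (Set.range m) := by
  induction w using Finsupp.induction_linear with
  | zero => simp
  | add a b ha hb => simpa only [map_add, Finsupp.add_apply] using add_mem ha hb
  | single T r => exact bdry_single_apply_mem_span m T r S

end

theorem chainMap_single {R : Type} [CommRing R] {X Y : Type} [TopologicalSpace X]
    [TopologicalSpace Y] (f : C(X, Y)) {n : ℕ} (T : C(Cube n, X)) (r : R) :
    chainMap R f n (Finsupp.single T r) = Finsupp.single (f.comp T) r := by
  simp [chainMap, Finsupp.lift_apply, Finsupp.sum_single_index]

/-- If the generalized cubical homology theory of weight `m` satisfies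
the homotopy axiom (homotopic maps induce the same map on homology, expressed here on
cycles: the difference of the induced chains of a cycle is a boundary), then the
weight generates the unit ideal: there are `r₀,…,r_L` with `Σ r_k·m_k = 1`. -/
theorem span_of_homotopy_axiom (R : Type) [CommRing R] (L : ℕ) (m : Fin (L + 1) → R)
    (haxiom : ∀ (X Y : Type) [TopologicalSpace X] [TopologicalSpace Y] (f g : C(X, Y)),
      f.Homotopic g → ∀ (n : ℕ) (u : Kmod R X n), u ∈ cyclesMod R m X n →
        chainMap R f n u - chainMap R g n u ∈ LinearMap.range (bdry R m Y n)) :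
    ∃ r : Fin (L + 1) → R, ∑ k, r k * m k = 1 := by
  set f : C(Cube 0, unitInterval) := .const _ 0
  set g : C(Cube 0, unitInterval) := .const _ 1
  have hfg : f.Homotopic g :=
    ContinuousMap.homotopic_const_iff.2 ⟨⟨.id _, rfl, rfl⟩⟩
  have hf_ne_g : f ≠ g := fun h => zero_ne_one (congrArg (fun k => k default) h)
  set u : Kmod R (Cube 0) 0 := Finsupp.single (ContinuousMap.id _) 1
  obtain ⟨w, hw⟩ := haxiom _ _ f g hfg 0 u Submodule.mem_top
  have hcoeff : (chainMap R f 0 u - chainMap R g 0 u) g = -1 := by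
    simp [u, chainMap_single, hf_ne_g]
  have hmem : (-1 : R) ∈ Ideal.span (Set.range m) :=
    hcoeff ▸ hw ▸ bdry_apply_mem_span m w g
  exact Ideal.mem_span_range_iff_exists_fun.1 (by simpa using neg_mem hmem)
end
end
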